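/- arXiv:1207.6923 — 8 statements merged into one kernel-verified Lean document; each statement's English description precedes it below -/
import Mathlib

section
/- Let S be a 0-F-inverse semigroup, G a group, and σ : S^× → G a morphism that is injective on the set M(S) of maximal elements of (S^×, ≤). Then σ is idempotent pure, i.e. σ(s) = 1 implies that s is an idempotent. -/
/-!
A grading is trivial on nonzero idempotents and hence constant along the natural order on
`S^×`. So if `σ s = 1`, the maximal elements `m ≥ s` and `n ≥ s s*` have the same image `1`,
and injectivity on maximal elements gives `m = n`. Then `s = s s* m` and `s s* = s s* n`,
whence `s = s s*`. The inverse-semigroup input is that idempotents commute, which yields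
`(a b)* = b* a*` and `s ≤ t → s = s s* t`.
-/

/-- An inverse semigroup structure on a semigroup with zero: `star s` is the unique
generalized inverse of `s`. -/
structure IsInvSemigroup (S : Type*) [SemigroupWithZero S] (star : S → S) : Prop where
  mul_star_mul : ∀ s : S, s * star s * s = s
  star_mul_star : ∀ s : S, star s * s * star s = star s
  star_unique : ∀ s t : S, s * t * s = s → t * s * t = t → t = star s

/-- `e` belongs to the semilattice of idempotents `E(S) = {s s* : s ∈ S}`. -/
def IsIdemE {S : Type*} [SemigroupWithZero S] (star : S → S) (e : S) : Prop :=
  ∃ x : S, e = x * star x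

/-- The natural partial order on an inverse semigroup: `s ≤ t` iff `s = e t` for some
idempotent `e`. -/
def natLe {S : Type*} [SemigroupWithZero S] (star : S → S) (s t : S) : Prop :=
  ∃ e : S, IsIdemE star e ∧ s = e * t

/-- `m` is a maximal element of `(S^×, ≤)`. -/
def IsMaxNonzero {S : Type*} [SemigroupWithZero S] (star : S → S) (m : S) : Prop :=
  m ≠ 0 ∧ ∀ t : S, t ≠ 0 → natLe star m t → t = m

/-- `S` is `0`-`F`-inverse: every nonzero element lies beneath a unique maximal element
of `(S^×, ≤)`. -/
def ZeroFInverse {S : Type*} [SemigroupWithZero S] (star : S → S) : Prop :=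
  ∀ s : S, s ≠ 0 → ∃! m : S, IsMaxNonzero star m ∧ natLe star s m

/-- A morphism (grading) `σ : S^× → G`: `σ(st) = σ(s)σ(t)` whenever `st ≠ 0`. -/
def IsGrading {S : Type*} [SemigroupWithZero S] {G : Type*} [Group G] (σ : S → G) : Prop :=
  ∀ s t : S, s ≠ 0 → t ≠ 0 → s * t ≠ 0 → σ (s * t) = σ s * σ t

namespace IsInvSemigroup

variable {S : Type*} [SemigroupWithZero S] {star : S → S}

theorem star_star (h : IsInvSemigroup S star) (a : S) : star (star a) = a :=
  (h.star_unique (star a) a (h.star_mul_star a) (h.mul_star_mul a)).symm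

theorem star_eq_self_of_mul_self (h : IsInvSemigroup S star) {e : S} (he : e * e = e) :
    star e = e :=
  (h.star_unique e e (by rw [he, he]) (by rw [he, he])).symm

theorem mul_star_mul_self (h : IsInvSemigroup S star) (a : S) :
    a * star a * (a * star a) = a * star a := by
  rw [← mul_assoc, h.mul_star_mul]

theorem mul_self_of_isIdemE (h : IsInvSemigroup S star) {e : S} (he : IsIdemE star e) :
    e * e = e := by
  obtain ⟨a, rfl⟩ := he
  exact h.mul_star_mul_self a

theorem mul_star_ne_zero (h : IsInvSemigroup S star) {a : S} (ha : a ≠ 0) :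
    a * star a ≠ 0 := by
  intro h0
  apply ha
  rw [← h.mul_star_mul a, h0, zero_mul]

/- `x := star (e * f)` equals `f * x * e`, another inverse of `e * f`, and is therefore
idempotent; so is its inverse `e * f`. -/
theorem mul_self_of_mul_self_of_mul_self (h : IsInvSemigroup S star) {e f : S}
    (he : e * e = e) (hf : f * f = f) : e * f * (e * f) = e * f := by
  set x := star (e * f) with hx
  have hinv₁ : e * f * x * (e * f) = e * f := h.mul_star_mul (e * f)
  have hinv₂ : x * (e * f) * x = x := h.star_mul_star (e * f)
  have hconj : f * x * e = x := by
    refine h.star_unique (e * f) (f * x * e) ?_ ?_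
    · calc e * f * (f * x * e) * (e * f) = e * f * x * (e * f) := by
            simp only [mul_assoc]; rw [← mul_assoc f f, hf, ← mul_assoc e e, he]
        _ = e * f := hinv₁
    · calc f * x * e * (e * f) * (f * x * e) = f * (x * (e * f) * x) * e := by
            simp only [mul_assoc]; rw [← mul_assoc e e, he, ← mul_assoc f f, hf]
        _ = f * x * e := by rw [hinv₂, mul_assoc]
  have hx_idem : x * x = x := by
    calc x * x = f * (x * (e * f) * x) * e := by
          conv_lhs => rw [← hconj]
          simp only [mul_assoc]
      _ = x := by rw [hinv₂, hconj]
  have hef : star x = e * f := by rw [hx, h.star_star]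
  rw [← hef, h.star_eq_self_of_mul_self hx_idem, hx_idem]

theorem mul_comm_of_mul_self (h : IsInvSemigroup S star) {e f : S}
    (he : e * e = e) (hf : f * f = f) : e * f = f * e := by
  have hef := h.mul_self_of_mul_self_of_mul_self he hf
  have hfe := h.mul_self_of_mul_self_of_mul_self hf he
  have hstar : f * e = star (e * f) := by
    refine h.star_unique (e * f) (f * e) ?_ ?_
    · calc e * f * (f * e) * (e * f) = e * f * (e * f) := by
            simp only [mul_assoc]; rw [← mul_assoc f f, hf, ← mul_assoc e e, he]
        _ = e * f := hef
    · calc f * e * (e * f) * (f * e) = f * e * (f * e) := by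
            simp only [mul_assoc]; rw [← mul_assoc e e, he, ← mul_assoc f f, hf]
        _ = f * e := hfe
  rw [hstar, h.star_eq_self_of_mul_self hef]

theorem star_mul_self_mul_self (h : IsInvSemigroup S star) (a : S) :
    star a * a * (star a * a) = star a * a := by
  simpa only [h.star_star] using h.mul_star_mul_self (star a)

theorem star_mul (h : IsInvSemigroup S star) (a b : S) :
    star (a * b) = star b * star a := by
  have hcomm : star a * a * (b * star b) = b * star b * (star a * a) :=
    h.mul_comm_of_mul_self (h.star_mul_self_mul_self a) (h.mul_star_mul_self b)
  refine (h.star_unique (a * b) (star b * star a) ?_ ?_).symm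
  · calc a * b * (star b * star a) * (a * b) = a * (b * star b * (star a * a)) * b := by
          simp only [mul_assoc]
      _ = a * star a * a * (b * star b * b) := by rw [← hcomm]; simp only [mul_assoc]
      _ = a * b := by rw [h.mul_star_mul, h.mul_star_mul]
  · calc star b * star a * (a * b) * (star b * star a)
          = star b * (star a * a * (b * star b)) * star a := by simp only [mul_assoc]
      _ = star b * b * star b * (star a * a * star a) := by rw [hcomm]; simp only [mul_assoc]
      _ = star b * star a := by rw [h.star_mul_star, h.star_mul_star]

theorem eq_mul_star_mul_of_natLe (h : IsInvSemigroup S star) {s t : S}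
    (hst : natLe star s t) : s = s * star s * t := by
  obtain ⟨e, heE, rfl⟩ := hst
  have he := h.mul_self_of_isIdemE heE
  rw [h.star_mul, h.star_eq_self_of_mul_self he]
  calc e * t = e * (t * star t * t) := by rw [h.mul_star_mul]
    _ = e * (e * (t * star t)) * t := by rw [← mul_assoc e e, he]; simp only [mul_assoc]
    _ = e * t * (star t * e) * t := by
      rw [← h.mul_comm_of_mul_self (h.mul_star_mul_self t) he]; simp only [mul_assoc]

theorem eq_mul_of_natLe_of_mul_self (h : IsInvSemigroup S star) {e t : S} (he : e * e = e)
    (het : natLe star e t) : e = e * t := by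
  have := h.eq_mul_star_mul_of_natLe het
  rwa [h.star_eq_self_of_mul_self he, he] at this

end IsInvSemigroup

namespace IsGrading

variable {S G : Type*} [SemigroupWithZero S] [Group G] {σ : S → G}

theorem apply_eq_one_of_mul_self (hσ : IsGrading σ) {e : S} (he : e * e = e) (he0 : e ≠ 0) :
    σ e = 1 := by
  have h := hσ e e he0 he0 (by rwa [he])
  rw [he] at h
  exact mul_eq_left.mp h.symm

theorem apply_eq_of_natLe (hσ : IsGrading σ) {star : S → S} (hinv : IsInvSemigroup S star)
    {s t : S} (hs : s ≠ 0) (hst : natLe star s t) : σ s = σ t := by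
  obtain ⟨e, heE, rfl⟩ := hst
  have he0 := left_ne_zero_of_mul hs
  rw [hσ e t he0 (right_ne_zero_of_mul hs) hs,
    hσ.apply_eq_one_of_mul_self (hinv.mul_self_of_isIdemE heE) he0, one_mul]

end IsGrading

/-- if `S` is a `0`-`F`-inverse semigroup and `σ : S^× → G` is a morphism that
is injective on the set of maximal elements of `(S^×, ≤)`, then `σ` is idempotent pure. -/
theorem stmt0 {S G : Type*} [SemigroupWithZero S] [Group G] (star : S → S)
    (hinv : IsInvSemigroup S star) (hF : ZeroFInverse star)
    (σ : S → G) (hσ : IsGrading σ)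
    (hinj : ∀ m m' : S, IsMaxNonzero star m → IsMaxNonzero star m' → σ m = σ m' → m = m') :
    ∀ s : S, s ≠ 0 → σ s = 1 → IsIdemE star s := by
  intro s hs hσs
  set e := s * star s
  have he : e * e = e := hinv.mul_star_mul_self s
  have he0 : e ≠ 0 := hinv.mul_star_ne_zero hs
  obtain ⟨m, ⟨hm, hsm⟩, -⟩ := hF s hs
  obtain ⟨n, ⟨hn, hen⟩, -⟩ := hF e he0
  have hmn : m = n := hinj m n hm hn <| by
    rw [← hσ.apply_eq_of_natLe hinv hs hsm, ← hσ.apply_eq_of_natLe hinv he0 hen, hσs,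
      hσ.apply_eq_one_of_mul_self he he0]
  refine ⟨s, ?_⟩
  calc s = e * m := hinv.eq_mul_star_mul_of_natLe hsm
    _ = e := by rw [hmn, ← hinv.eq_mul_of_natLe_of_mul_self he hen]
end

section
/- Let Y be a locally compact Hausdorff space, X ⊆ Y an open subspace that is totally disconnected, and let a group G act on Y by homeomorphisms with ⋃_{g∈G} g·X = Y. Let J be a collection of nonempty compact open subsets of X such that (g·p) ∩ X ∈ J ∪ {∅} for every p ∈ J and g ∈ G, and set W = {g·p : g ∈ G, p ∈ J}. If J is independent, then W is independent. -/
/-!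
Translating by `g⁻¹`, a relation `g • p = ⋃ gᵢ • pᵢ` in `W` becomes `p = ⋃ hᵢ • pᵢ` with `p ∈ J`.
Since `p ⊆ X`, also `p = ⋃ (hᵢ • pᵢ) ∩ X`, and each piece lies in `J` or is empty, so
independence of `J` yields `p = (hₖ • pₖ) ∩ X ⊆ hₖ • pₖ ⊆ p`.
-/

open Set Pointwise

/-- A family `V` of (nonempty compact open) sets is independent if whenever a member `U`
is a finite union of members `U₁, …, Uₙ`, then `U = U_j` for some `j`. -/
def IndepFam {Y : Type*} (V : Set (Set Y)) : Prop :=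
  ∀ (U : Set Y) (n : ℕ) (Us : Fin n → Set Y), U ∈ V → (∀ i, Us i ∈ V) →
    U = ⋃ i, Us i → ∃ j, U = Us j

namespace IndepFam

variable {Y : Type*} {V : Set (Set Y)}

theorem nonempty_of_mem (hV : IndepFam V) {U : Set Y} (hU : U ∈ V) : U.Nonempty := by
  rw [nonempty_iff_ne_empty]
  rintro rfl
  obtain ⟨j, -⟩ := hV ∅ 0 Fin.elim0 hU (fun i => i.elim0) (by simp)
  exact j.elim0

theorem exists_eq_of_eq_iUnion_of_mem_or_eq_empty (hV : IndepFam V) {U : Set Y} (hU : U ∈ V)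
    {n : ℕ} {Us : Fin n → Set Y} (hUs : ∀ i, Us i ∈ V ∨ Us i = ∅) (hUnion : U = ⋃ i, Us i) :
    ∃ j, U = Us j := by
  classical
  obtain ⟨x, hx⟩ := hV.nonempty_of_mem hU
  rw [hUnion, mem_iUnion] at hx
  obtain ⟨i₀, hxi₀⟩ := hx
  have hi₀ : Us i₀ ∈ V := (hUs i₀).resolve_right (Nonempty.ne_empty ⟨x, hxi₀⟩)
  -- replace the empty pieces by the nonempty piece `Us i₀`, which does not change the union
  set Vs : Fin n → Set Y := fun i => if Us i ∈ V then Us i else Us i₀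
  have hVs : ∀ i, Vs i ∈ V := fun i => by
    by_cases h : Us i ∈ V <;> simp [Vs, h, hi₀]
  have hVs_union : U = ⋃ i, Vs i := by
    refine hUnion.trans (Subset.antisymm (iUnion_mono fun i => ?_) (iUnion_subset fun i => ?_))
    · rcases hUs i with h | h
      · simp [Vs, h]
      · simp [h]
    · by_cases h : Us i ∈ V
      · simpa [Vs, h] using subset_iUnion Us i
      · simpa [Vs, h] using subset_iUnion Us i₀
  obtain ⟨j, hj⟩ := hV U n Vs hU hVs hVs_union
  by_cases h : Us j ∈ V
  · exact ⟨j, by simpa [Vs, h] using hj⟩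
  · exact ⟨i₀, by simpa [Vs, h] using hj⟩

theorem exists_eq_smul_of_eq_iUnion_smul {Y G : Type*} [Group G] [MulAction G Y]
    {X : Set Y} {J : Set (Set Y)} (hJX : ∀ p ∈ J, p ⊆ X)
    (hJinv : ∀ p ∈ J, ∀ g : G, (g • p) ∩ X ∈ J ∨ (g • p) ∩ X = ∅) (hJind : IndepFam J)
    {p : Set Y} (hp : p ∈ J) {n : ℕ} {hs : Fin n → G} {ps : Fin n → Set Y}
    (hps : ∀ i, ps i ∈ J) (hUnion : p = ⋃ i, hs i • ps i) :
    ∃ k, p = hs k • ps k := by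
  have hUnion_X : p = ⋃ i, (hs i • ps i) ∩ X := by
    rw [← iUnion_inter, ← hUnion, inter_eq_left.mpr (hJX p hp)]
  obtain ⟨k, hk⟩ := hJind.exists_eq_of_eq_iUnion_of_mem_or_eq_empty hp
    (fun i => hJinv (ps i) (hps i) (hs i)) hUnion_X
  refine ⟨k, Subset.antisymm (hk ▸ inter_subset_left) ?_⟩
  exact hUnion ▸ subset_iUnion (fun i => hs i • ps i) k

end IndepFam

theorem stmt4_general {Y G : Type*} [TopologicalSpace Y]
    [Group G] [MulAction G Y]
    (X : Set Y)
    (J : Set (Set Y)) (hJ : ∀ p ∈ J, p ⊆ X ∧ IsCompact p ∧ IsOpen p ∧ p.Nonempty)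
    (hJinv : ∀ p ∈ J, ∀ g : G, (g • p) ∩ X ∈ J ∨ (g • p) ∩ X = ∅)
    (hJind : IndepFam J) :
    IndepFam {w : Set Y | ∃ g : G, ∃ p ∈ J, w = g • p} := by
  rintro _ n Us ⟨g, p, hp, rfl⟩ hUs hUnion
  choose gs ps hps hUs_eq using hUs
  have hp_union : p = ⋃ i, (g⁻¹ * gs i) • ps i := by
    simp_rw [mul_smul, ← smul_set_iUnion, ← hUs_eq, ← hUnion, inv_smul_smul]
  obtain ⟨k, hk⟩ := IndepFam.exists_eq_smul_of_eq_iUnion_smul (fun q hq => (hJ q hq).1)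
    hJinv hJind hp hps hp_union
  exact ⟨k, by rw [hUs_eq k, hk, mul_smul, smul_inv_smul]⟩

/-- `Y` locally compact Hausdorff, `X ⊆ Y` open and totally disconnected,
`G` acting on `Y` by homeomorphisms with `⋃ g, g • X = Y`, and `J` a family of nonempty
compact open subsets of `X` with `(g • p) ∩ X ∈ J ∪ {∅}` for `p ∈ J`, `g ∈ G`.  If `J` is
independent, then so is `W = {g • p : g ∈ G, p ∈ J}`. -/
theorem stmt4 {Y G : Type*} [TopologicalSpace Y] [LocallyCompactSpace Y] [T2Space Y]
    [Group G] [MulAction G Y] [ContinuousConstSMul G Y]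
    (X : Set Y) (hX : IsOpen X)
    (hXtd : ∀ U : Set Y, U ⊆ X → IsOpen U → ∀ x ∈ U,
      ∃ K : Set Y, IsCompact K ∧ IsOpen K ∧ x ∈ K ∧ K ⊆ U)
    (hcover : ⋃ g : G, g • X = univ)
    (J : Set (Set Y)) (hJ : ∀ p ∈ J, p ⊆ X ∧ IsCompact p ∧ IsOpen p ∧ p.Nonempty)
    (hJinv : ∀ p ∈ J, ∀ g : G, (g • p) ∩ X ∈ J ∨ (g • p) ∩ X = ∅)
    (hJind : IndepFam J) :
    IndepFam {w : Set Y | ∃ g : G, ∃ p ∈ J, w = g • p} :=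
  stmt4_general X J hJ hJinv hJind
end

section
/- Let Y be a locally compact Hausdorff space, X ⊆ Y an open subspace that is totally disconnected, and let a group G act on Y by homeomorphisms with ⋃_{g∈G} g·X = Y. Let J be a collection of compact open subsets of X such that (g·p) ∩ X ∈ J ∪ {∅} for every p ∈ J and g ∈ G, and set W = {g·p : g ∈ G, p ∈ J}. If J is a generating family for the compact open subsets of X, then every member of W is compact open in Y, W is a generating family for the compact open subsets of Y, and Y is totally disconnected. -/
open Set Pointwise

/-- The family generated by `V` under finite intersections, finite unions and set
differences (so `{A | GenFam V A}`, for `V` a family of compact open sets, is the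
smallest family of compact open sets containing `V` and closed under these operations). -/
inductive GenFam {Y : Type*} (V : Set (Set Y)) : Set Y → Prop
  | base : ∀ U ∈ V, GenFam V U
  | inter : ∀ {A B : Set Y}, GenFam V A → GenFam V B → GenFam V (A ∩ B)
  | union : ∀ {A B : Set Y}, GenFam V A → GenFam V B → GenFam V (A ∪ B)
  | sdiff : ∀ {A B : Set Y}, GenFam V A → GenFam V B → GenFam V (A \ B)

/-!
A point of `Y` lies in some translate `g • X`, so it has a neighbourhood basis of sets
`g • K` with `K ⊆ X` compact open; each such `K` is generated by `J`, hence `g • K` by the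
translates `W`. A compact open set is covered by finitely many of these, so it is generated
by `W`; conversely compact open sets are closed under the generating operations, the
difference because compact sets are closed in a Hausdorff space.
-/

namespace GenFam

variable {Y : Type*} {V : Set (Set Y)} {A : Set Y}

theorem smul_set {G : Type*} [Group G] [MulAction G Y] {W : Set (Set Y)} (g : G)
    (hVW : ∀ U ∈ V, g • U ∈ W) (hA : GenFam V A) : GenFam W (g • A) := by
  induction hA with
  | base U hU => exact base _ (hVW U hU)
  | inter _ _ ih₁ ih₂ => rw [smul_set_inter]; exact inter ih₁ ih₂
  | union _ _ ih₁ ih₂ => rw [smul_set_union]; exact union ih₁ ih₂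
  | sdiff _ _ ih₁ ih₂ => rw [smul_set_sdiff]; exact sdiff ih₁ ih₂

variable [TopologicalSpace Y]

theorem isCompact_isOpen [T2Space Y] (hV : ∀ U ∈ V, IsCompact U ∧ IsOpen U)
    (hA : GenFam V A) : IsCompact A ∧ IsOpen A := by
  induction hA with
  | base U hU => exact hV U hU
  | inter _ _ ih₁ ih₂ => exact ⟨ih₁.1.inter ih₂.1, ih₁.2.inter ih₂.2⟩
  | union _ _ ih₁ ih₂ => exact ⟨ih₁.1.union ih₂.1, ih₁.2.union ih₂.2⟩
  | sdiff _ _ ih₁ ih₂ => exact ⟨ih₁.1.diff ih₂.2, ih₁.2.sdiff ih₂.1.isClosed⟩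

theorem of_isCompact (hA : IsCompact A) (hempty : GenFam V ∅)
    (hloc : ∀ a ∈ A, ∃ K, GenFam V K ∧ IsOpen K ∧ a ∈ K ∧ K ⊆ A) : GenFam V A := by
  suffices ∃ K, GenFam V K ∧ A ⊆ K ∧ K ⊆ A by
    obtain ⟨K, hK, hAK, hKA⟩ := this
    rwa [hAK.antisymm hKA]
  refine hA.induction_on (p := fun S ↦ ∃ K, GenFam V K ∧ S ⊆ K ∧ K ⊆ A)
    ⟨∅, hempty, subset_rfl, empty_subset A⟩ ?_ ?_ ?_
  · rintro S T hST ⟨K, hK, hTK, hKA⟩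
    exact ⟨K, hK, hST.trans hTK, hKA⟩
  · rintro S T ⟨K, hK, hSK, hKA⟩ ⟨L, hL, hTL, hLA⟩
    exact ⟨K ∪ L, union hK hL, union_subset_union hSK hTL, union_subset hKA hLA⟩
  · intro a ha
    obtain ⟨K, hK, hKo, haK, hKA⟩ := hloc a ha
    exact ⟨K, mem_nhdsWithin_of_mem_nhds (hKo.mem_nhds haK), K, hK, subset_rfl, hKA⟩

end GenFam

theorem exists_smul_isCompact_isOpen_subset {Y G : Type*} [TopologicalSpace Y] [Group G]
    [MulAction G Y] [ContinuousConstSMul G Y] {X : Set Y} (hX : IsOpen X)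
    (hXtd : ∀ U : Set Y, U ⊆ X → IsOpen U → ∀ x ∈ U,
      ∃ K : Set Y, IsCompact K ∧ IsOpen K ∧ x ∈ K ∧ K ⊆ U)
    (hcover : ⋃ g : G, g • X = univ) {A : Set Y} (hA : IsOpen A) {a : Y} (ha : a ∈ A) :
    ∃ g : G, ∃ K ⊆ X, IsCompact K ∧ IsOpen K ∧ a ∈ g • K ∧ g • K ⊆ A := by
  obtain ⟨g, hg⟩ := mem_iUnion.mp (hcover ▸ mem_univ a)
  have hsub : g⁻¹ • (A ∩ g • X) ⊆ X := by
    rw [smul_set_inter, inv_smul_smul]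
    exact inter_subset_right
  obtain ⟨K, hKc, hKo, haK, hKU⟩ := hXtd _ hsub ((hA.inter (hX.smul g)).smul g⁻¹)
    (g⁻¹ • a) (smul_mem_smul_set ⟨ha, hg⟩)
  exact ⟨g, K, hKU.trans hsub, hKc, hKo, mem_smul_set_iff_inv_smul_mem.mpr haK,
    (smul_set_subset_iff_subset_inv_smul_set.mpr hKU).trans inter_subset_left⟩

theorem stmt5_general {Y G : Type*} [TopologicalSpace Y] [T2Space Y]
    [Group G] [MulAction G Y] [ContinuousConstSMul G Y]
    (X : Set Y) (hX : IsOpen X)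
    (hXtd : ∀ U : Set Y, U ⊆ X → IsOpen U → ∀ x ∈ U,
      ∃ K : Set Y, IsCompact K ∧ IsOpen K ∧ x ∈ K ∧ K ⊆ U)
    (hcover : ⋃ g : G, g • X = univ)
    (J : Set (Set Y))
    (hJgen : {A : Set Y | A ⊆ X ∧ IsCompact A ∧ IsOpen A} = {A : Set Y | GenFam J A}) :
    (∀ w ∈ {w : Set Y | ∃ g : G, ∃ p ∈ J, w = g • p}, IsCompact w ∧ IsOpen w) ∧
    ({A : Set Y | IsCompact A ∧ IsOpen A} =
      {A : Set Y | GenFam {w : Set Y | ∃ g : G, ∃ p ∈ J, w = g • p} A}) ∧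
    (∀ U : Set Y, IsOpen U → ∀ y ∈ U,
      ∃ K : Set Y, IsCompact K ∧ IsOpen K ∧ y ∈ K ∧ K ⊆ U) := by
  set W : Set (Set Y) := {w : Set Y | ∃ g : G, ∃ p ∈ J, w = g • p}
  have hJ : ∀ {K}, GenFam J K ↔ K ⊆ X ∧ IsCompact K ∧ IsOpen K := by
    intro K; exact (Set.ext_iff.mp hJgen K).symm
  have hsmul : ∀ (g : G) {K}, GenFam J K → GenFam W (g • K) :=
    fun g _ ↦ GenFam.smul_set g fun p hp ↦ ⟨g, p, hp, rfl⟩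
  have hW : ∀ w ∈ W, IsCompact w ∧ IsOpen w := by
    rintro w ⟨g, p, hp, rfl⟩
    obtain ⟨-, hpc, hpo⟩ := hJ.mp (.base p hp)
    exact ⟨hpc.smul g, hpo.smul g⟩
  have hloc : ∀ U : Set Y, IsOpen U → ∀ y ∈ U,
      ∃ K, GenFam W K ∧ IsCompact K ∧ IsOpen K ∧ y ∈ K ∧ K ⊆ U := by
    intro U hU y hy
    obtain ⟨g, K, hKX, hKc, hKo, hyK, hKU⟩ :=
      exists_smul_isCompact_isOpen_subset (G := G) hX hXtd hcover hU hy
    exact ⟨g • K, hsmul g (hJ.mpr ⟨hKX, hKc, hKo⟩), hKc.smul g, hKo.smul g, hyK, hKU⟩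
  have hempty : GenFam W ∅ := by
    simpa using hsmul (1 : G) (hJ.mpr ⟨empty_subset X, isCompact_empty, isOpen_empty⟩)
  refine ⟨hW, ?_, fun U hU y hy ↦ ?_⟩
  · ext A
    refine ⟨fun ⟨hAc, hAo⟩ ↦ GenFam.of_isCompact hAc hempty fun a ha ↦ ?_,
      GenFam.isCompact_isOpen hW⟩
    obtain ⟨K, hK, -, hKo, haK, hKA⟩ := hloc A hAo a ha
    exact ⟨K, hK, hKo, haK, hKA⟩
  · obtain ⟨K, -, hKc, hKo, hyK, hKU⟩ := hloc U hU y hy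
    exact ⟨K, hKc, hKo, hyK, hKU⟩

/-- `Y` locally compact Hausdorff, `X ⊆ Y` open and totally disconnected,
`G` acting on `Y` by homeomorphisms with `⋃ g, g • X = Y`, and `J` a family of compact
open subsets of `X` with `(g • p) ∩ X ∈ J ∪ {∅}` for `p ∈ J`, `g ∈ G`.  If `J` is a
generating family for the compact open subsets of `X`, then every member of
`W = {g • p : g ∈ G, p ∈ J}` is compact open in `Y`, `W` is a generating family for the
compact open subsets of `Y`, and `Y` is totally disconnected. -/
theorem stmt5 {Y G : Type*} [TopologicalSpace Y] [LocallyCompactSpace Y] [T2Space Y]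
    [Group G] [MulAction G Y] [ContinuousConstSMul G Y]
    (X : Set Y) (hX : IsOpen X)
    (hXtd : ∀ U : Set Y, U ⊆ X → IsOpen U → ∀ x ∈ U,
      ∃ K : Set Y, IsCompact K ∧ IsOpen K ∧ x ∈ K ∧ K ⊆ U)
    (hcover : ⋃ g : G, g • X = univ)
    (J : Set (Set Y)) (hJ : ∀ p ∈ J, p ⊆ X ∧ IsCompact p ∧ IsOpen p)
    (hJinv : ∀ p ∈ J, ∀ g : G, (g • p) ∩ X ∈ J ∨ (g • p) ∩ X = ∅)
    (hJgen : {A : Set Y | A ⊆ X ∧ IsCompact A ∧ IsOpen A} = {A : Set Y | GenFam J A}) :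
    (∀ w ∈ {w : Set Y | ∃ g : G, ∃ p ∈ J, w = g • p}, IsCompact w ∧ IsOpen w) ∧
    ({A : Set Y | IsCompact A ∧ IsOpen A} =
      {A : Set Y | GenFam {w : Set Y | ∃ g : G, ∃ p ∈ J, w = g • p} A}) ∧
    (∀ U : Set Y, IsOpen U → ∀ y ∈ U,
      ∃ K : Set Y, IsCompact K ∧ IsOpen K ∧ y ∈ K ∧ K ⊆ U) :=
  stmt5_general X hX hXtd hcover J hJgen
end

section
/- Let E be a countable semilattice with zero, Ê its spectrum, and for e ∈ E let D_e = {φ ∈ Ê : φ(e) = 1}. For e ∈ E ∖ {0} and a finite subset Z ⊆ {f ∈ E : f ≤ e}, let D_{(e,Z)} = D_e ∖ ⋃_{z∈Z} D_z. Then each D_{(e,Z)} is a compact open subset of Ê, the collection T = {D_{(e,Z)} : e ∈ E ∖ {0}, Z ⊆ {f : f ≤ e} finite} is a basis for the topology of Ê, and every compact open subset of Ê is a finite union of elements of T ∪ {∅}. -/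
/-- A character on a semilattice `E` with zero (modelled as a meet-semilattice with bottom
element `⊥`): a nonzero semilattice homomorphism `φ : E → {0,1}` with `φ(0) = 0`, where
`{0,1}` is modelled by `Bool` under `&&`. -/
def IsCharL {E : Type*} [SemilatticeInf E] [OrderBot E] (φ : E → Bool) : Prop :=
  (∀ x y : E, φ (x ⊓ y) = (φ x && φ y)) ∧ φ ⊥ = false ∧ ∃ x : E, φ x = true

/-- The spectrum `Ê ⊆ {0,1}^E` of the semilattice `E`: the set of characters, with the
topology inherited from the product topology on `E → Bool`. -/
abbrev SpecL (E : Type*) [SemilatticeInf E] [OrderBot E] : Type _ :=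
  {φ : E → Bool // IsCharL φ}

/-- The set `D_e = {φ ∈ Ê : φ(e) = 1}`. -/
def DL {E : Type*} [SemilatticeInf E] [OrderBot E] (e : E) : Set (SpecL E) :=
  {φ : SpecL E | φ.1 e = true}

/-!
The sets `D_e` are clopen, and `D_e` is compact because its image in `E → Bool` is cut out by
the closed conditions "multiplicative, `φ 0 = 0`, `φ e = 1`"; hence each `D_(e,Z)` is compact
open. For the basis property, a product-topology neighbourhood of a character `φ` prescribes the
values of `φ` on a finite set `I`; taking `e` the meet of the elements of `I` (and of one element)
on which `φ` is `1`, and `Z = {e ⊓ n : n ∈ I, φ n = 0}`, every character in `D_(e,Z)` has the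
same values on `I`. Compactness then lets finitely many basic sets cover a compact open set.
-/

open Set TopologicalSpace

theorem exists_finset_agree_subset_of_isOpen {ι α : Type*} [TopologicalSpace α]
    {S : Set (ι → α)} {U : Set S} (hU : IsOpen U) {φ : S} (hφ : φ ∈ U) :
    ∃ I : Finset ι, {ψ : S | ∀ i ∈ I, ψ.1 i = φ.1 i} ⊆ U := by
  obtain ⟨V, hV, rfl⟩ := isOpen_induced_iff.mp hU
  obtain ⟨I, u, hu, hIu⟩ := isOpen_pi_iff.mp hV φ.1 hφ
  refine ⟨I, fun ψ hψ => hIu fun i hi => ?_⟩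
  rw [Finset.mem_coe] at hi
  rw [hψ i hi]
  exact (hu i hi).2

theorem TopologicalSpace.IsTopologicalBasis.exists_fin_iUnion_eq_of_isCompact_of_isOpen
    {X : Type*} [TopologicalSpace X] {B : Set (Set X)} (hB : IsTopologicalBasis B)
    {K : Set X} (hK : IsCompact K) (hKo : IsOpen K) :
    ∃ (n : ℕ) (f : Fin n → Set X), (∀ i, f i ∈ B) ∧ K = ⋃ i, f i := by
  have hcover : K ⊆ ⋃ s ∈ {s | s ∈ B ∧ s ⊆ K}, s := by
    rw [← sUnion_eq_biUnion, ← hB.open_eq_sUnion' hKo]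
  obtain ⟨C, hCB, hC, hKC⟩ :=
    hK.elim_finite_subcover_image (fun s hs => hB.isOpen hs.1) hcover
  obtain ⟨n, f, rfl⟩ := hC.fin_embedding
  rw [← sUnion_eq_biUnion, sUnion_range] at hKC
  refine ⟨n, f, fun i => (hCB (mem_range_self i)).1, hKC.antisymm ?_⟩
  exact iUnion_subset fun i => (hCB (mem_range_self i)).2

theorem isClosed_setOf_map_inf {E : Type*} [SemilatticeInf E] :
    IsClosed {ψ : E → Bool | ∀ x y, ψ (x ⊓ y) = (ψ x && ψ y)} := by
  simp only [ofPred_forall]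
  exact isClosed_iInter fun x => isClosed_iInter fun y =>
    isClosed_eq (continuous_apply _) (by fun_prop)

section Spectrum

variable {E : Type*} [SemilatticeInf E] [OrderBot E]

theorem SpecL.apply_inf (φ : SpecL E) (x y : E) : φ.1 (x ⊓ y) = (φ.1 x && φ.1 y) :=
  φ.2.1 x y

theorem SpecL.apply_eq_true_of_le {φ : SpecL E} {x y : E} (h : x ≤ y) (hx : φ.1 x = true) :
    φ.1 y = true := by
  have := φ.apply_inf x y
  rwa [inf_eq_left.mpr h, hx, Bool.true_and, eq_comm] at this

theorem SpecL.apply_inf'_eq_true {φ : SpecL E} {s : Finset E} (hs : s.Nonempty)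
    (h : ∀ x ∈ s, φ.1 x = true) : φ.1 (s.inf' hs id) = true := by
  induction hs using Finset.Nonempty.cons_induction with
  | singleton a => simpa using h a (by simp)
  | cons a s ha hs ih =>
    rw [Finset.inf'_cons hs, φ.apply_inf, id_eq, h a (by simp),
      ih fun x hx => h x (by simp [hx]), Bool.true_and]

theorem continuous_SpecL_apply (e : E) : Continuous fun φ : SpecL E => φ.1 e :=
  (continuous_apply e).comp continuous_subtype_val

theorem isClopen_DL (e : E) : IsClopen (DL e) :=
  (isClopen_discrete {true}).preimage (continuous_SpecL_apply e)

theorem image_val_DL (e : E) : Subtype.val '' DL e =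
    {ψ : E → Bool | ∀ x y, ψ (x ⊓ y) = (ψ x && ψ y)} ∩ {ψ | ψ ⊥ = false} ∩ {ψ | ψ e = true} := by
  ext ψ
  constructor
  · rintro ⟨φ, hφ, rfl⟩
    exact ⟨⟨φ.2.1, φ.2.2.1⟩, hφ⟩
  · rintro ⟨⟨hinf, hbot⟩, he⟩
    exact ⟨⟨ψ, hinf, hbot, e, he⟩, he, rfl⟩

theorem isCompact_DL (e : E) : IsCompact (DL e) := by
  rw [Topology.IsEmbedding.subtypeVal.isCompact_iff, image_val_DL]
  refine IsClosed.isCompact ((isClosed_setOf_map_inf.inter ?_).inter ?_)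
  · exact isClosed_eq (continuous_apply _) continuous_const
  · exact isClosed_eq (continuous_apply _) continuous_const

theorem isClopen_biUnion_DL (Z : Finset E) : IsClopen (⋃ z ∈ Z, DL z) :=
  isClopen_biUnion_finset fun z _ => isClopen_DL z

theorem isCompact_DL_diff (e : E) (Z : Finset E) : IsCompact (DL e \ ⋃ z ∈ Z, DL z) :=
  (isCompact_DL e).diff (isClopen_biUnion_DL Z).isOpen

theorem isOpen_DL_diff (e : E) (Z : Finset E) : IsOpen (DL e \ ⋃ z ∈ Z, DL z) :=
  (isClopen_DL e).isOpen.sdiff (isClopen_biUnion_DL Z).isClosed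

theorem mem_DL_diff_iff {e : E} {Z : Finset E} {ψ : SpecL E} :
    ψ ∈ DL e \ ⋃ z ∈ Z, DL z ↔ ψ.1 e = true ∧ ∀ z ∈ Z, ψ.1 z = false := by
  simp [DL]

variable (E) in
/-- The collection `T` of the sets `D_(e,Z)`. -/
def basicOpensL : Set (Set (SpecL E)) :=
  {U | ∃ (e : E) (Z : Finset E), e ≠ ⊥ ∧ (∀ z ∈ Z, z ≤ e) ∧ U = DL e \ ⋃ z ∈ Z, DL z}

theorem exists_basicOpensL_agree (φ : SpecL E) (I : Finset E) :
    ∃ U ∈ basicOpensL E, φ ∈ U ∧ ∀ ψ ∈ U, ∀ i ∈ I, ψ.1 i = φ.1 i := by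
  classical
  obtain ⟨x₀, hx₀⟩ := φ.2.2.2
  set P := insert x₀ (I.filter fun i => φ.1 i = true)
  have hP : P.Nonempty := Finset.insert_nonempty _ _
  set e := P.inf' hP id
  have hφe : φ.1 e = true := SpecL.apply_inf'_eq_true hP fun x hx => by
    rcases Finset.mem_insert.mp hx with rfl | hx
    exacts [hx₀, (Finset.mem_filter.mp hx).2]
  have he : e ≠ ⊥ := fun h => by simp [h, φ.2.2.1] at hφe
  set Z := (I.filter fun i => φ.1 i = false).image (e ⊓ ·)
  have hZ : ∀ z ∈ Z, z ≤ e := by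
    simp only [Z, Finset.mem_image]
    rintro _ ⟨n, _, rfl⟩
    exact inf_le_left
  refine ⟨_, ⟨e, Z, he, hZ, rfl⟩, mem_DL_diff_iff.mpr ⟨hφe, ?_⟩, fun ψ hψ i hi => ?_⟩
  · simp only [Z, Finset.mem_image, Finset.mem_filter]
    rintro _ ⟨n, ⟨_, hn⟩, rfl⟩
    rw [φ.apply_inf, hφe, hn, Bool.true_and]
  obtain ⟨hψe, hψZ⟩ := mem_DL_diff_iff.mp hψ
  cases hφi : φ.1 i with
  | true =>
    exact SpecL.apply_eq_true_of_le
      (Finset.inf'_le id (Finset.mem_insert_of_mem (Finset.mem_filter.mpr ⟨hi, hφi⟩))) hψe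
  | false =>
    have := hψZ _ (Finset.mem_image_of_mem _ (Finset.mem_filter.mpr ⟨hi, hφi⟩))
    rwa [ψ.apply_inf, hψe, Bool.true_and] at this

theorem isTopologicalBasis_basicOpensL : IsTopologicalBasis (basicOpensL E) := by
  refine isTopologicalBasis_of_isOpen_of_nhds ?_ fun φ U hφU hU => ?_
  · rintro U ⟨e, Z, -, -, rfl⟩
    exact isOpen_DL_diff e Z
  obtain ⟨I, hIU⟩ := exists_finset_agree_subset_of_isOpen hU hφU
  obtain ⟨V, hV, hφV, hVI⟩ := exists_basicOpensL_agree φ I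
  exact ⟨V, hV, hφV, fun ψ hψ => hIU (hVI ψ hψ)⟩

end Spectrum

theorem stmt7_general {E : Type*} [SemilatticeInf E] [OrderBot E] :
    (∀ e : E, e ≠ ⊥ → ∀ Z : Finset E, (∀ z ∈ Z, z ≤ e) →
      IsCompact (DL e \ ⋃ z ∈ Z, DL z) ∧ IsOpen (DL e \ ⋃ z ∈ Z, DL z)) ∧
    TopologicalSpace.IsTopologicalBasis
      {U : Set (SpecL E) | ∃ (e : E) (Z : Finset E), e ≠ ⊥ ∧ (∀ z ∈ Z, z ≤ e) ∧
        U = DL e \ ⋃ z ∈ Z, DL z} ∧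
    (∀ K : Set (SpecL E), IsCompact K → IsOpen K →
      ∃ (n : ℕ) (f : Fin n → Set (SpecL E)),
        (∀ i, f i ∈ {U : Set (SpecL E) | ∃ (e : E) (Z : Finset E), e ≠ ⊥ ∧
          (∀ z ∈ Z, z ≤ e) ∧ U = DL e \ ⋃ z ∈ Z, DL z}) ∧
        K = ⋃ i, f i) :=
  ⟨fun e _ Z _ => ⟨isCompact_DL_diff e Z, isOpen_DL_diff e Z⟩, isTopologicalBasis_basicOpensL,
    fun _ hK hKo =>
      isTopologicalBasis_basicOpensL.exists_fin_iUnion_eq_of_isCompact_of_isOpen hK hKo⟩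

/-- for a countable semilattice `E` with zero, each set
`D_{(e,Z)} = D_e ∖ ⋃_{z ∈ Z} D_z` (for `e ≠ 0` and `Z` a finite set of elements `≤ e`) is
compact open in `Ê`, the collection `T` of all such sets is a basis for the topology of
`Ê`, and every compact open subset of `Ê` is a finite union of elements of `T ∪ {∅}`. -/
theorem stmt7 {E : Type*} [SemilatticeInf E] [OrderBot E] [Countable E] :
    (∀ e : E, e ≠ ⊥ → ∀ Z : Finset E, (∀ z ∈ Z, z ≤ e) →
      IsCompact (DL e \ ⋃ z ∈ Z, DL z) ∧ IsOpen (DL e \ ⋃ z ∈ Z, DL z)) ∧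
    TopologicalSpace.IsTopologicalBasis
      {U : Set (SpecL E) | ∃ (e : E) (Z : Finset E), e ≠ ⊥ ∧ (∀ z ∈ Z, z ≤ e) ∧
        U = DL e \ ⋃ z ∈ Z, DL z} ∧
    (∀ K : Set (SpecL E), IsCompact K → IsOpen K →
      ∃ (n : ℕ) (f : Fin n → Set (SpecL E)),
        (∀ i, f i ∈ {U : Set (SpecL E) | ∃ (e : E) (Z : Finset E), e ≠ ⊥ ∧
          (∀ z ∈ Z, z ≤ e) ∧ U = DL e \ ⋃ z ∈ Z, DL z}) ∧
        K = ⋃ i, f i) :=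
  stmt7_general
end

section
/- Let P be a submonoid of a group G, and let I_P^λ be the left inverse hull of P. Then every nonzero f ∈ I_P^λ acts by a left translation: there exists a unique g ∈ G such that f(q) = g q for all q ∈ dom f. -/
open Classical

/-- The partial bijection `λ_p : P → pP`, `q ↦ p q`, of the submonoid `P` of a group. -/
noncomputable def lamPE {G : Type*} [Group G] (P : Submonoid G) (p : P) :
    PartialEquiv P P where
  toFun q := ⟨(p : G) * q, mul_mem p.2 q.2⟩
  invFun q := if h : ((p : G))⁻¹ * q ∈ P then ⟨((p : G))⁻¹ * q, h⟩ else 1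
  source := Set.univ
  target := {q : P | ((p : G))⁻¹ * q ∈ P}
  map_source' := by
    intro q _
    simp only [Set.mem_setOf_eq, inv_mul_cancel_left]
    exact q.2
  map_target' := by intro q _; trivial
  left_inv' := by
    intro q _
    have h : ((p : G))⁻¹ * (((⟨(p : G) * q, mul_mem p.2 q.2⟩ : P) : G)) ∈ P := by
      simp only [inv_mul_cancel_left]; exact q.2
    simp only [dif_pos h]
    ext
    simp [inv_mul_cancel_left]
  right_inv' := by
    intro q hq
    simp only [Set.mem_setOf_eq] at hq
    simp only [dif_pos hq]
    ext
    simp [mul_inv_cancel_left]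

/-- The empty partial bijection (the zero element of `I(P)`). -/
def emptyPE {G : Type*} [Group G] (P : Submonoid G) : PartialEquiv P P where
  toFun _ := 1
  invFun _ := 1
  source := ∅
  target := ∅
  map_source' := fun _ h => absurd h (Set.notMem_empty _)
  map_target' := fun _ h => absurd h (Set.notMem_empty _)
  left_inv' := fun _ h => absurd h (Set.notMem_empty _)
  right_inv' := fun _ h => absurd h (Set.notMem_empty _)

/-- The left inverse hull `I_P^λ` of `P`: the smallest collection of partial bijections of
`P` containing every `λ_p` and the empty map, closed under composition and inversion. -/
inductive LeftHull {G : Type*} [Group G] (P : Submonoid G) : PartialEquiv P P → Prop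
  | lam (p : P) : LeftHull P (lamPE P p)
  | zero : LeftHull P (emptyPE P)
  | comp {f f' : PartialEquiv P P} : LeftHull P f → LeftHull P f' → LeftHull P (f.trans f')
  | inv {f : PartialEquiv P P} : LeftHull P f → LeftHull P f.symm

/-! Each generator `λ_p` is left translation by `p`, and the empty map is translation by
anything; left translations by `g` and `g'` compose to translation by `g' g` and invert to
translation by `g⁻¹`. Induction over the hull gives a translating element, and cancelling at
any point of the nonempty domain shows it is unique. -/

namespace PartialEquiv

variable {G S : Type*} [Group G] [SetLike S G] {P Q R : S}

def IsLeftTranslation (f : PartialEquiv P Q) (g : G) : Prop :=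
  ∀ q ∈ f.source, ((f q : Q) : G) = g * q

namespace IsLeftTranslation

variable {f : PartialEquiv P Q} {g g' : G}

theorem trans {f' : PartialEquiv Q R} (hf : f.IsLeftTranslation g)
    (hf' : f'.IsLeftTranslation g') : (f.trans f').IsLeftTranslation (g' * g) := by
  intro q hq
  rw [trans_source] at hq
  rw [coe_trans, Function.comp_apply, hf' _ hq.2, hf q hq.1, mul_assoc]

theorem symm (hf : f.IsLeftTranslation g) : f.symm.IsLeftTranslation g⁻¹ := by
  intro q hq
  have h := hf _ (f.map_target hq)
  rw [f.right_inv hq] at h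
  rw [h, inv_mul_cancel_left]

theorem unique (hs : f.source.Nonempty) (hf : f.IsLeftTranslation g)
    (hf' : f.IsLeftTranslation g') : g = g' :=
  let ⟨q, hq⟩ := hs
  mul_right_cancel ((hf q hq).symm.trans (hf' q hq))

end IsLeftTranslation

end PartialEquiv

section LeftHull

variable {G : Type*} [Group G] (P : Submonoid G)

theorem isLeftTranslation_lamPE (p : P) : (lamPE P p).IsLeftTranslation (p : G) :=
  fun _ _ => rfl

theorem isLeftTranslation_emptyPE (g : G) : (emptyPE P).IsLeftTranslation g :=
  fun _ hq => absurd hq (Set.notMem_empty _)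

variable {P}

theorem LeftHull.exists_isLeftTranslation {f : PartialEquiv P P} (hf : LeftHull P f) :
    ∃ g : G, f.IsLeftTranslation g := by
  induction hf with
  | lam p => exact ⟨p, isLeftTranslation_lamPE P p⟩
  | zero => exact ⟨1, isLeftTranslation_emptyPE P 1⟩
  | comp _ _ ih ih' =>
    obtain ⟨g, hg⟩ := ih
    obtain ⟨g', hg'⟩ := ih'
    exact ⟨g' * g, hg.trans hg'⟩
  | inv _ ih =>
    obtain ⟨g, hg⟩ := ih
    exact ⟨g⁻¹, hg.symm⟩

end LeftHull

/-- every nonzero element of the left inverse hull of `P ⊆ G` acts by a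
unique left translation: there is a unique `g ∈ G` with `f(q) = g q` for all `q ∈ dom f`. -/
theorem stmt12 {G : Type*} [Group G] (P : Submonoid G) :
    ∀ f : PartialEquiv P P, LeftHull P f → f.source.Nonempty →
      ∃! g : G, ∀ q ∈ f.source, ((f q : P) : G) = g * q := by
  intro f hf hs
  obtain ⟨g, hg⟩ := hf.exists_isLeftTranslation
  exact ⟨g, hg, fun _ hg' => PartialEquiv.IsLeftTranslation.unique hs hg' hg⟩
end

section
/- Let P be a submonoid of a group G and I_P^λ its left inverse hull. For each nonzero f ∈ I_P^λ let σ(f) denote the unique g ∈ G with f(q) = g q for all q ∈ dom f. Then the following are equivalent: (i) for every g ∈ G with g⁻¹P ∩ P ≠ ∅, the partial bijection α_g : g⁻¹P ∩ P → gP ∩ P, p ↦ gp, belongs to I_P^λ; (ii) every nonzero f ∈ I_P^λ lies beneath a unique maximal element of the set of nonzero elements of I_P^λ partially ordered by restriction, and σ is injective on the set of these maximal elements. -/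
open Classical

/-- The order on partial bijections by restriction: `f ≤ f'` iff `dom f ⊆ dom f'` and
`f'` agrees with `f` on `dom f`. -/
def Below {G : Type*} [Group G] {P : Submonoid G} (f f' : PartialEquiv P P) : Prop :=
  f.source ⊆ f'.source ∧ ∀ q ∈ f.source, f q = f' q

/-- `m` is a maximal element of the set of nonzero elements of the left inverse hull,
partially ordered by restriction (equality of partial bijections being equality of
graphs, i.e. mutual restriction). -/
def IsMaxHull {G : Type*} [Group G] (P : Submonoid G) (m : PartialEquiv P P) : Prop :=
  LeftHull P m ∧ m.source.Nonempty ∧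
    ∀ f : PartialEquiv P P, LeftHull P f → f.source.Nonempty → Below m f → Below f m


/-!
Every element of the hull acts on its domain as left translation by one group element
(induction on the hull). If `α_g` belongs to the hull, it contains every element translating
by `g`, so it is the largest nonzero element of grading `g`; hence it is the unique maximal
element above any `f` of grading `g`, and the only maximal element of grading `g`.
Conversely, any `q` with `g q ∈ P` lies in the domain of `λ_{gq} ∘ λ_q⁻¹`, which translates
by `g`, hence in the domain of a maximal element of grading `g`; injectivity of `σ` makes that
maximal element independent of `q`, so its domain is all of `g⁻¹P ∩ P`.
-/

section LeftHull

variable {G : Type*} [Group G] {P : Submonoid G}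

def TranslatesBy (f : PartialEquiv P P) (g : G) : Prop :=
  ∀ q ∈ f.source, ((f q : P) : G) = g * q

theorem Below.trans {a b c : PartialEquiv P P} (hab : Below a b) (hbc : Below b c) :
    Below a c :=
  ⟨hab.1.trans hbc.1, fun q hq => (hab.2 q hq).trans (hbc.2 q (hab.1 hq))⟩

theorem translatesBy_lamPE (p : P) : TranslatesBy (lamPE P p) p := fun _ _ => rfl

namespace TranslatesBy

variable {f f' : PartialEquiv P P} {g g' : G}

theorem source_subset (hf : TranslatesBy f g) : f.source ⊆ {q : P | g * (q : G) ∈ P} :=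
  fun q hq => show g * (q : G) ∈ P from hf q hq ▸ (f q).2

theorem below (hf : TranslatesBy f g) (hf' : TranslatesBy f' g) (hs : f.source ⊆ f'.source) :
    Below f f' :=
  ⟨hs, fun q hq => Subtype.ext (by rw [hf q hq, hf' q (hs hq)])⟩

theorem eq_of_below (hf : TranslatesBy f g) (hf' : TranslatesBy f' g') (hb : Below f f')
    (hne : f.source.Nonempty) : g = g' := by
  obtain ⟨q, hq⟩ := hne
  have h := hf' q (hb.1 hq)
  rw [← hb.2 q hq, hf q hq] at h
  exact mul_right_cancel h

theorem trans (hf : TranslatesBy f g) (hf' : TranslatesBy f' g') :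
    TranslatesBy (f.trans f') (g' * g) := fun q hq => by
  rw [PartialEquiv.trans_apply, hf' (f q) hq.2, hf q hq.1, mul_assoc]

theorem symm (hf : TranslatesBy f g) : TranslatesBy f.symm g⁻¹ := fun q hq => by
  have h := hf (f.symm q) (f.map_target hq)
  rw [f.right_inv hq] at h
  rw [h, inv_mul_cancel_left]

end TranslatesBy

theorem LeftHull.exists_translatesBy {f : PartialEquiv P P} (hf : LeftHull P f) :
    ∃ g : G, TranslatesBy f g := by
  induction hf with
  | lam p => exact ⟨p, translatesBy_lamPE p⟩
  | zero => exact ⟨1, fun q hq => absurd hq (Set.notMem_empty _)⟩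
  | comp _ _ ih₁ ih₂ =>
    obtain ⟨g₁, hg₁⟩ := ih₁
    obtain ⟨g₂, hg₂⟩ := ih₂
    exact ⟨g₂ * g₁, hg₁.trans hg₂⟩
  | inv _ ih =>
    obtain ⟨g, hg⟩ := ih
    exact ⟨g⁻¹, hg.symm⟩

theorem exists_leftHull_translatesBy_mem_source {g : G} {q₀ : P} (h₀ : g * (q₀ : G) ∈ P) :
    ∃ f : PartialEquiv P P, LeftHull P f ∧ TranslatesBy f g ∧ q₀ ∈ f.source := by
  set p : P := ⟨g * q₀, h₀⟩
  have hg : (p : G) * (q₀ : G)⁻¹ = g := mul_inv_cancel_right g q₀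
  refine ⟨(lamPE P q₀).symm.trans (lamPE P p), .comp (.inv (.lam q₀)) (.lam p), ?_, ?_⟩
  · exact hg ▸ (translatesBy_lamPE q₀).symm.trans (translatesBy_lamPE p)
  · simp [lamPE]

section FullTranslation

variable {α : PartialEquiv P P} {g : G}

theorem below_of_source_eq (hsrc : α.source = {q : P | g * (q : G) ∈ P})
    (hα : TranslatesBy α g) {f : PartialEquiv P P} (hf : TranslatesBy f g) : Below f α :=
  hf.below hα (hsrc ▸ hf.source_subset)

theorem isMaxHull_of_source_eq (hαP : LeftHull P α)
    (hsrc : α.source = {q : P | g * (q : G) ∈ P}) (hα : TranslatesBy α g)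
    (hne : α.source.Nonempty) : IsMaxHull P α := by
  refine ⟨hαP, hne, fun f hf _ hαf => ?_⟩
  obtain ⟨g', hg'⟩ := hf.exists_translatesBy
  obtain rfl := hα.eq_of_below hg' hαf hne
  exact below_of_source_eq hsrc hα hg'

theorem IsMaxHull.below_and_above_of_source_eq {m : PartialEquiv P P} (hm : IsMaxHull P m)
    (hmg : TranslatesBy m g) (hαP : LeftHull P α) (hsrc : α.source = {q : P | g * (q : G) ∈ P})
    (hα : TranslatesBy α g) : Below m α ∧ Below α m := by
  have hmα := below_of_source_eq hsrc hα hmg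
  exact ⟨hmα, hm.2.2 α hαP (hm.2.1.mono hmα.1) hmα⟩

end FullTranslation

theorem exists_isMaxHull_translatesBy_mem_source
    (hmax : ∀ f : PartialEquiv P P, LeftHull P f → f.source.Nonempty →
      ∃ m : PartialEquiv P P, IsMaxHull P m ∧ Below f m)
    {g : G} {q : P} (hq : g * (q : G) ∈ P) :
    ∃ m : PartialEquiv P P, IsMaxHull P m ∧ TranslatesBy m g ∧ q ∈ m.source := by
  obtain ⟨f, hfP, hfg, hqf⟩ := exists_leftHull_translatesBy_mem_source hq
  obtain ⟨m, hm, hfm⟩ := hmax f hfP ⟨q, hqf⟩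
  obtain ⟨g', hmg'⟩ := hm.1.exists_translatesBy
  obtain rfl := hfg.eq_of_below hmg' hfm ⟨q, hqf⟩
  exact ⟨m, hm, hmg', hfm.1 hqf⟩

end LeftHull

/-- for a submonoid `P` of a group `G`, the following are equivalent:
(i) for every `g ∈ G` with `g⁻¹P ∩ P ≠ ∅`, the partial bijection
`α_g : g⁻¹P ∩ P → gP ∩ P`, `p ↦ g p`, belongs to the left inverse hull `I_P^λ`;
(ii) every nonzero `f ∈ I_P^λ` lies beneath a unique maximal element of the nonzero part
of `I_P^λ` ordered by restriction, and the grading `σ` (where `σ(f)` is the unique group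
element by which `f` acts by left translation) is injective on maximal elements. -/
theorem stmt13 {G : Type*} [Group G] (P : Submonoid G) :
    (∀ g : G, {q : P | g * (q : G) ∈ P}.Nonempty →
      ∃ f : PartialEquiv P P, LeftHull P f ∧ f.source = {q : P | g * (q : G) ∈ P} ∧
        ∀ q ∈ f.source, ((f q : P) : G) = g * q) ↔
    ((∀ f : PartialEquiv P P, LeftHull P f → f.source.Nonempty →
        ∃ m : PartialEquiv P P, (IsMaxHull P m ∧ Below f m) ∧
          ∀ m' : PartialEquiv P P, IsMaxHull P m' → Below f m' →
            Below m' m ∧ Below m m') ∧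
      (∀ m m' : PartialEquiv P P, IsMaxHull P m → IsMaxHull P m' → ∀ g : G,
        (∀ q ∈ m.source, ((m q : P) : G) = g * q) →
        (∀ q ∈ m'.source, ((m' q : P) : G) = g * q) →
        Below m m' ∧ Below m' m)) := by
  constructor
  · intro hα
    refine ⟨fun f hf hne => ?_, fun m m' hm hm' g hmg hm'g => ?_⟩
    · obtain ⟨g, hfg⟩ := hf.exists_translatesBy
      obtain ⟨α, hαP, hsrc, hαg⟩ := hα g (hne.mono hfg.source_subset)
      have hmax := isMaxHull_of_source_eq hαP hsrc hαg (hsrc ▸ hne.mono hfg.source_subset)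
      refine ⟨α, ⟨hmax, below_of_source_eq hsrc hαg hfg⟩, fun m' hm' hfm' => ?_⟩
      obtain ⟨g', hm'g'⟩ := hm'.1.exists_translatesBy
      obtain rfl := hfg.eq_of_below hm'g' hfm' hne
      exact hm'.below_and_above_of_source_eq hm'g' hαP hsrc hαg
    · obtain ⟨α, hαP, hsrc, hαg⟩ := hα g (hm.2.1.mono (TranslatesBy.source_subset hmg))
      obtain ⟨hmα, hαm⟩ := hm.below_and_above_of_source_eq hmg hαP hsrc hαg
      obtain ⟨hm'α, hαm'⟩ := hm'.below_and_above_of_source_eq hm'g hαP hsrc hαg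
      exact ⟨hmα.trans hαm', hm'α.trans hαm⟩
  · rintro ⟨hmax, hinj⟩ g ⟨q₀, hq₀⟩
    have hmax' := fun f hf hne => (hmax f hf hne).imp fun _ h => h.1
    obtain ⟨m, hm, hmg, -⟩ := exists_isMaxHull_translatesBy_mem_source hmax' hq₀
    refine ⟨m, hm.1, hmg.source_subset.antisymm fun q hq => ?_, hmg⟩
    obtain ⟨m', hm', hm'g, hqm'⟩ := exists_isMaxHull_translatesBy_mem_source hmax' hq
    exact (hinj m' m hm' hm g hm'g hmg).1.1 hqm'
end

section
/- Let E = (E⁰, E¹, s, r) be a directed graph, F the free group on the set E¹, and h : E* → F the map sending a vertex to 1 and a string of edges μ_n⋯μ_1 to the product of the corresponding generators. Define σ(μ,ν) = h(μ) h(ν)⁻¹ for (μ,ν) ∈ S_E ∖ {0}. Then σ(x y) = σ(x) σ(y) whenever x, y ∈ S_E ∖ {0} and x y ≠ 0; and if (μ,ν) and (μ',ν') are elements of S_E ∖ {0} such that μ ≠ ν, μ' ≠ ν', μ and ν have no common initial segment, μ' and ν' have no common initial segment, and σ(μ,ν) = σ(μ',ν'), then (μ,ν) = (μ',ν'). -/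
/-- Finite paths `μ_n ⋯ μ_1` in the directed graph with vertices `V`, edges `E` and
source/range maps `gs, gr : E → V`: `GPath gs gr a b` is the type of finite paths with
source `a` and range `b` (a single vertex being a path of length zero). -/
inductive GPath {V E : Type*} (gs gr : E → V) : V → V → Type _
  | nil (v : V) : GPath gs gr v v
  | cons {a b c : V} (p : GPath gs gr a b) (e : E) (h1 : gs e = b) (h2 : gr e = c) :
      GPath gs gr a c

/-- Concatenation of composable paths. -/
def GPath.comp {V E : Type*} {gs gr : E → V} :
    ∀ {a b c : V}, GPath gs gr a b → GPath gs gr b c → GPath gs gr a c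
  | _, _, _, p, .nil _ => p
  | _, _, _, p, .cons q e h1 h2 => .cons (p.comp q) e h1 h2

/-- The set `E^*` of all finite paths, bundled with their source and range. -/
def PathStar {V E : Type*} (gs gr : E → V) : Type _ := Σ a b : V, GPath gs gr a b

/-- `composes x y z` means that `x` and `y` are composable (the range of `x` is the source
of `y`) and `z` is the concatenation of `x` followed by `y` (i.e. `z = y x` in the string
notation `μ_n ⋯ μ_1`). -/
def composes {V E : Type*} {gs gr : E → V} (x y z : PathStar gs gr) : Prop :=
  ∃ (a b c : V) (p : GPath gs gr a b) (q : GPath gs gr b c),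
    x = ⟨a, b, p⟩ ∧ y = ⟨b, c, q⟩ ∧ z = ⟨a, c, p.comp q⟩

/-- `x` is a single vertex (a path of length zero). -/
def isVertexPath {V E : Type*} {gs gr : E → V} (x : PathStar gs gr) : Prop :=
  ∃ v : V, x = ⟨v, v, GPath.nil v⟩

/-- `μ` and `ν` have no common initial segment: there are no path `ρ` that is not a vertex
and paths `μ', ν'` with `μ = μ' ρ` and `ν = ν' ρ`. -/
def NoCommonInit {V E : Type*} {gs gr : E → V} (μ ν : PathStar gs gr) : Prop :=
  ¬ ∃ ρ μ' ν' : PathStar gs gr, ¬ isVertexPath ρ ∧ composes ρ μ' μ ∧ composes ρ ν' ν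

/-- The map `h : E^* → F` into the free group on the edge set, sending a vertex to `1` and
a string of edges to the product of the corresponding generators. -/
def hmap {V E : Type*} {gs gr : E → V} : ∀ {a b : V}, GPath gs gr a b → FreeGroup E
  | _, _, .nil _ => 1
  | _, _, .cons p e _ _ => FreeGroup.of e * hmap p

/-- `h` on bundled paths. -/
def hstar {V E : Type*} {gs gr : E → V} (x : PathStar gs gr) : FreeGroup E := hmap x.2.2

/-!
`h` is multiplicative from concatenation of paths to the free group, so the multiplicativity
of `σ` is a computation in the free group. For injectivity: when `μ` and `ν` start with different
edges, the word `μ ν⁻¹` is already reduced, so `σ(μ,ν)` determines the edge strings of `μ` and `ν`.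
Their common source is then the source of the first edge of whichever of them is not a vertex,
and they cannot both be vertices since `μ ≠ ν`.
-/

namespace GPath

variable {V E : Type*} {gs gr : E → V}

/-- The string `μ_n ⋯ μ_1` of edges, so the first edge `μ_1` is the last letter. -/
def toList : ∀ {a b : V}, GPath gs gr a b → List E
  | _, _, .nil _ => []
  | _, _, .cons p e _ _ => e :: p.toList

@[simp] theorem toList_nil (v : V) : (nil v : GPath gs gr v v).toList = [] := by rw [toList]

@[simp] theorem toList_cons {a b c : V} (p : GPath gs gr a b) (e : E) (h1 : gs e = b)
    (h2 : gr e = c) : (cons p e h1 h2).toList = e :: p.toList := by rw [toList]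

theorem hmap_comp : ∀ {a b c : V} (p : GPath gs gr a b) (q : GPath gs gr b c),
    hmap (p.comp q) = hmap q * hmap p
  | _, _, _, _, .nil _ => by rw [comp, hmap, one_mul]
  | _, _, _, p, .cons q e _ _ => by rw [comp, hmap, hmap, hmap_comp p q, mul_assoc]

theorem hmap_eq_mk : ∀ {a b : V} (p : GPath gs gr a b),
    hmap p = FreeGroup.mk (p.toList.map (·, true))
  | _, _, .nil _ => by rw [hmap, toList_nil, List.map_nil, FreeGroup.one_eq_mk]
  | _, _, .cons p e _ _ => by
    rw [hmap, hmap_eq_mk p, FreeGroup.of, FreeGroup.mul_mk, toList_cons]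
    rfl

theorem sigma_eq_of_toList_eq {a : V} :
    ∀ {b b' : V} (p : GPath gs gr a b) (q : GPath gs gr a b'),
      p.toList = q.toList → (⟨b, p⟩ : Σ c, GPath gs gr a c) = ⟨b', q⟩
  | _, _, .nil _, .nil _, _ => rfl
  | _, _, .nil _, .cons .., h => by simp at h
  | _, _, .cons .., .nil _, h => by simp at h
  | _, _, .cons p e _ he, .cons q f _ hf, h => by
    obtain ⟨rfl, hpq⟩ := List.cons.inj (by simpa using h)
    cases sigma_eq_of_toList_eq p q hpq
    cases he.symm.trans hf
    rfl

theorem exists_eq_edge_comp {a b : V} (p : GPath gs gr a b) {l : List E} {e : E}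
    (h : p.toList = l ++ [e]) :
    ∃ (he : gs e = a) (p' : GPath gs gr (gr e) b), p = (cons (nil a) e he rfl).comp p' := by
  induction p generalizing l with
  | nil => simp at h
  | cons p f hf hf' ih =>
    rcases l with _ | ⟨g, l⟩
    · obtain ⟨rfl, hp⟩ : f = e ∧ p.toList = [] := by simpa using h
      cases p with
      | nil => subst hf'; exact ⟨hf, nil _, by rw [comp]⟩
      | cons => simp at hp
    · obtain ⟨rfl, hp⟩ : f = g ∧ p.toList = l ++ [e] := by simpa using h
      obtain ⟨he, p', rfl⟩ := ih hp
      exact ⟨he, cons p' f hf hf', by rw [comp]⟩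

end GPath

namespace FreeGroup

variable {α : Type*}

theorem isReduced_map_prodMk (l : List α) (b : Bool) : IsReduced (l.map (·, b)) :=
  (List.isChain_map _).2 (List.pairwise_of_forall fun _ _ _ => rfl).isChain

theorem IsReduced.eq_of_mk_eq {L₁ L₂ : List (α × Bool)} (h₁ : IsReduced L₁) (h₂ : IsReduced L₂)
    (h : mk L₁ = mk L₂) : L₁ = L₂ := by
  obtain ⟨L, hL₁, hL₂⟩ := Red.exact.1 h
  exact (h₁.red_iff_eq.1 hL₁).symm.trans (h₂.red_iff_eq.1 hL₂)

theorem eq_and_eq_of_map_true_append_map_false_eq {l₁ l₂ m₁ m₂ : List α}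
    (h : l₁.map (·, true) ++ m₁.map (·, false) = l₂.map (·, true) ++ m₂.map (·, false)) :
    l₁ = l₂ ∧ m₁ = m₂ := by
  have hpos := congrArg (List.filterMap fun x : α × Bool => if x.2 then some x.1 else none) h
  have hneg := congrArg (List.filterMap fun x : α × Bool => if x.2 then none else some x.1) h
  simp only [List.filterMap_append, List.filterMap_map] at hpos hneg
  simpa using And.intro hpos hneg

end FreeGroup

namespace PathStar

open FreeGroup

variable {V E : Type*} {gs gr : E → V}

def word (x : PathStar gs gr) : List E := x.2.2.toList

def edge (e : E) : PathStar gs gr := ⟨gs e, gr e, .cons (.nil _) e rfl rfl⟩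

theorem hstar_eq_mk (x : PathStar gs gr) : hstar x = mk (x.word.map (·, true)) :=
  GPath.hmap_eq_mk _

theorem hstar_of_composes {x y z : PathStar gs gr} (h : composes x y z) :
    hstar z = hstar y * hstar x := by
  obtain ⟨a, b, c, p, q, rfl, rfl, rfl⟩ := h
  exact GPath.hmap_comp p q

theorem ext_word {x y : PathStar gs gr} (h₁ : x.1 = y.1) (h₂ : x.word = y.word) : x = y := by
  obtain ⟨a, b, p⟩ := x
  obtain ⟨a', b', q⟩ := y
  cases h₁
  exact Sigma.ext rfl (heq_of_eq (GPath.sigma_eq_of_toList_eq p q h₂))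

theorem gs_eq_fst_of_word_eq_append {x : PathStar gs gr} {l : List E} {e : E}
    (h : x.word = l ++ [e]) : gs e = x.1 :=
  (GPath.exists_eq_edge_comp x.2.2 h).1

theorem fst_eq_of_word_eq {x y : PathStar gs gr} (h : x.word = y.word) (hx : x.word ≠ []) :
    x.1 = y.1 := by
  obtain ⟨l, hl⟩ := List.getLast?_eq_some_iff.1 (List.getLast?_eq_some_getLast hx)
  exact (gs_eq_fst_of_word_eq_append hl).symm.trans (gs_eq_fst_of_word_eq_append (h.symm.trans hl))

theorem exists_composes_edge {x : PathStar gs gr} {l : List E} {e : E}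
    (h : x.word = l ++ [e]) : ∃ x' : PathStar gs gr, composes (edge e) x' x := by
  obtain ⟨a, b, p⟩ := x
  obtain ⟨rfl, p', rfl⟩ := GPath.exists_eq_edge_comp p h
  exact ⟨⟨gr e, b, p'⟩, _, _, _, _, p', rfl, rfl, rfl⟩

theorem not_isVertexPath_edge (e : E) : ¬ isVertexPath (edge e : PathStar gs gr) := by
  rintro ⟨v, hv⟩
  simpa [word, edge] using congrArg word hv

theorem _root_.NoCommonInit.getLast?_word_ne {μ ν : PathStar gs gr} (h : NoCommonInit μ ν) :
    ∀ e ∈ μ.word.getLast?, ∀ f ∈ ν.word.getLast?, e ≠ f := by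
  rintro e he _ hf rfl
  obtain ⟨_, hμ⟩ := List.getLast?_eq_some_iff.1 he
  obtain ⟨_, hν⟩ := List.getLast?_eq_some_iff.1 hf
  obtain ⟨μ', hμ'⟩ := exists_composes_edge hμ
  obtain ⟨ν', hν'⟩ := exists_composes_edge hν
  exact h ⟨edge e, μ', ν', not_isVertexPath_edge e, hμ', hν'⟩

theorem hstar_mul_inv_hstar (μ ν : PathStar gs gr) :
    hstar μ * (hstar ν)⁻¹ = mk (μ.word.map (·, true) ++ (ν.word.map (·, false)).reverse) := by
  rw [hstar_eq_mk, hstar_eq_mk, inv_mk, mul_mk]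
  simp [invRev, Function.comp_def]

theorem isReduced_word_append_reverse {μ ν : PathStar gs gr} (h : NoCommonInit μ ν) :
    IsReduced (μ.word.map (·, true) ++ (ν.word.map (·, false)).reverse) := by
  refine List.isChain_append.2 ⟨isReduced_map_prodMk _ _, ?_, ?_⟩
  · rw [← List.map_reverse]
    exact isReduced_map_prodMk _ _
  · simp only [List.head?_reverse, List.getLast?_map, Option.mem_map]
    rintro _ ⟨e, he, rfl⟩ _ ⟨f, hf, rfl⟩ hef
    exact absurd hef (h.getLast?_word_ne e he f hf)

theorem word_eq_of_hstar_mul_inv_eq {μ ν μ' ν' : PathStar gs gr} (h : NoCommonInit μ ν)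
    (h' : NoCommonInit μ' ν') (hσ : hstar μ * (hstar ν)⁻¹ = hstar μ' * (hstar ν')⁻¹) :
    μ.word = μ'.word ∧ ν.word = ν'.word := by
  rw [hstar_mul_inv_hstar, hstar_mul_inv_hstar] at hσ
  have hw := (isReduced_word_append_reverse h).eq_of_mk_eq (isReduced_word_append_reverse h') hσ
  simp only [← List.map_reverse] at hw
  obtain ⟨hμ, hν⟩ := eq_and_eq_of_map_true_append_map_false_eq hw
  exact ⟨hμ, List.reverse_injective hν⟩

theorem eq_of_hstar_mul_inv_eq {μ ν μ' ν' : PathStar gs gr} (hμν : μ.1 = ν.1)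
    (hμ'ν' : μ'.1 = ν'.1) (hne : μ ≠ ν) (h : NoCommonInit μ ν) (h' : NoCommonInit μ' ν')
    (hσ : hstar μ * (hstar ν)⁻¹ = hstar μ' * (hstar ν')⁻¹) : μ = μ' ∧ ν = ν' := by
  obtain ⟨hwμ, hwν⟩ := word_eq_of_hstar_mul_inv_eq h h' hσ
  have hsrc : μ.1 = μ'.1 := by
    by_cases hμ : μ.word = []
    · have hν : ν.word ≠ [] := fun hν => hne (ext_word hμν (hμ.trans hν.symm))
      rw [hμν, fst_eq_of_word_eq hwν hν, hμ'ν']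
    · exact fst_eq_of_word_eq hwμ hμ
  exact ⟨ext_word hsrc hwμ, ext_word (by rw [← hμν, hsrc, hμ'ν']) hwν⟩

end PathStar

/-- with `σ(μ,ν) = h(μ) h(ν)⁻¹`, `σ` is multiplicative on nonzero products
in the graph inverse semigroup `S_E` (the two clauses covering the two cases
`ν = α ν'` and `α = ν α'` in which the product `(μ,ν)(α,β)` is nonzero), and `σ` is
injective on the nonidempotent maximal elements, i.e. on the pairs `(μ,ν)` with
`μ ≠ ν` having no common initial segment. -/
theorem stmt14 {V E : Type*} (gs gr : E → V) :
    (∀ μ ν α β ν' ξ : PathStar gs gr, μ.1 = ν.1 → α.1 = β.1 →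
      composes ν' α ν → composes ν' β ξ →
      hstar μ * (hstar ξ)⁻¹ = (hstar μ * (hstar ν)⁻¹) * (hstar α * (hstar β)⁻¹)) ∧
    (∀ μ ν α β α' ξ : PathStar gs gr, μ.1 = ν.1 → α.1 = β.1 →
      composes α' ν α → composes α' μ ξ →
      hstar ξ * (hstar β)⁻¹ = (hstar μ * (hstar ν)⁻¹) * (hstar α * (hstar β)⁻¹)) ∧
    (∀ μ ν μ' ν' : PathStar gs gr, μ.1 = ν.1 → μ'.1 = ν'.1 → μ ≠ ν → μ' ≠ ν' →
      NoCommonInit μ ν → NoCommonInit μ' ν' →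
      hstar μ * (hstar ν)⁻¹ = hstar μ' * (hstar ν')⁻¹ → μ = μ' ∧ ν = ν') := by
  refine ⟨?_, ?_, ?_⟩
  · intro μ ν α β ν' ξ _ _ hν hξ
    rw [PathStar.hstar_of_composes hν, PathStar.hstar_of_composes hξ]
    group
  · intro μ ν α β α' ξ _ _ hα hξ
    rw [PathStar.hstar_of_composes hα, PathStar.hstar_of_composes hξ]
    group
  · intro μ ν μ' ν' hμν hμ'ν' hne _ h h' hσ
    exact PathStar.eq_of_hstar_mul_inv_eq hμν hμ'ν' hne h h' hσ
end

section
/- Let T be a tiling of ℝⁿ, P ∈ M and t ∈ P. Let R be a nonempty patch with connected support and a, b ∈ R. If (a,R,a) ∼ (t,P,t) and (b,R,b) ∼ (t,P,t), then a = b. Consequently, any doubly pointed pattern class [a,R,b] with [a,R,a] = [b,R,b] = [t,P,t] is idempotent, so the isotropy group of the idempotent [t,P,t] under any grading of the connected tiling semigroup is trivial. -/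
open Set

/-- Points of `ℝⁿ`. -/
abbrev Euc (n : ℕ) : Type := EuclideanSpace ℝ (Fin n)

/-- A tile in `ℝⁿ`: a subset homeomorphic to the closed unit ball. -/
def IsTile {n : ℕ} (t : Set (Euc n)) : Prop :=
  Nonempty (t ≃ₜ (Metric.closedBall (0 : Euc n) 1))

/-- Translation of a subset of `ℝⁿ` by `x`. -/
def trS {n : ℕ} (x : Euc n) (t : Set (Euc n)) : Set (Euc n) := (fun y => y + x) '' t

/-- Translation of a collection of tiles by `x`. -/
def trP {n : ℕ} (x : Euc n) (P : Set (Set (Euc n))) : Set (Set (Euc n)) := trS x '' P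

/-- A partial tiling: a collection of tiles with pairwise disjoint interiors. -/
def IsPartialTiling {n : ℕ} (T : Set (Set (Euc n))) : Prop :=
  (∀ t ∈ T, IsTile t) ∧ ∀ t ∈ T, ∀ r ∈ T, t ≠ r → interior t ∩ interior r = ∅

/-- A patch: a finite partial tiling. -/
def IsPatch {n : ℕ} (P : Set (Set (Euc n))) : Prop := IsPartialTiling P ∧ P.Finite

/-- A tiling: a partial tiling with support all of `ℝⁿ`. -/
def IsTiling {n : ℕ} (T : Set (Set (Euc n))) : Prop := IsPartialTiling T ∧ ⋃₀ T = univ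

/-- `M`: the set of subpatches of the tiling `T` with connected support. -/
def Mpatch {n : ℕ} (T : Set (Set (Euc n))) : Set (Set (Set (Euc n))) :=
  {P | P ⊆ T ∧ P.Finite ∧ IsPreconnected (⋃₀ P)}

/-- The equivalence of doubly pointed patches: `(t₁,P,t₂) ∼ (r₁,Q,r₂)` iff some
translation carries `t₁` to `r₁`, `t₂` to `r₂` and `P` to `Q`. -/
def sim3 {n : ℕ} (x y : Set (Euc n) × Set (Set (Euc n)) × Set (Euc n)) : Prop :=
  ∃ v : Euc n, trS v x.1 = y.1 ∧ trS v x.2.2 = y.2.2 ∧ trP v x.2.1 = y.2.1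

/-- `mulRelT T x y z` means that in the connected tiling semigroup of `T` the product of
the classes of `x = (t₁,P,t₂)` and `y = (r₁,Q,r₂)` is nonzero and equals the class of
`z`: there are translations `v, w` with `P + v` and `Q + w` patches in `T`,
`t₂ + v = r₁ + w`, and `z ∼ (t₁ + v, (P + v) ∪ (Q + w), r₂ + w)`. -/
def mulRelT {n : ℕ} (T : Set (Set (Euc n)))
    (x y z : Set (Euc n) × Set (Set (Euc n)) × Set (Euc n)) : Prop :=
  ∃ v w : Euc n, trP v x.2.1 ⊆ T ∧ trP w y.2.1 ⊆ T ∧ trS v x.2.2 = trS w y.1 ∧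
    sim3 (trS v x.1, trP v x.2.1 ∪ trP w y.2.1, trS w y.2.2) z

/-- `x = (t₁,P,t₂)` represents an element of the connected tiling semigroup `S_T`:
`t₁, t₂ ∈ P` and `P` is congruent to a subpatch of `T` with connected support. -/
def InST {n : ℕ} (T : Set (Set (Euc n)))
    (x : Set (Euc n) × Set (Set (Euc n)) × Set (Euc n)) : Prop :=
  x.1 ∈ x.2.1 ∧ x.2.2 ∈ x.2.1 ∧ ∃ v : Euc n, trP v x.2.1 ∈ Mpatch T

/-!
A compact nonempty set in a real inner product space is invariant under no nonzero
translation `u`: the point of the set maximising `⟪u, ·⟫` would otherwise be moved to a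
point of the set with larger value. The support of a nonempty patch is such a set, so the
translations carrying `R` onto `P` in `(a,R,a) ∼ (t,P,t)` and `(b,R,b) ∼ (t,P,t)` coincide,
whence `a = b`. Then `[a,R,a]` is idempotent, and a group element `g` with `g = g * g`
is `1`.
-/


section Translation

variable {n : ℕ}

lemma trS_trS (u v : Euc n) (s : Set (Euc n)) : trS u (trS v s) = trS (v + u) s := by
  simp only [trS, image_image, add_assoc]

@[simp]
lemma trS_zero (s : Set (Euc n)) : trS 0 s = s := by
  simp [trS]

lemma trS_injective (v : Euc n) : Function.Injective (trS v) := by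
  intro s s' h
  simpa only [trS_trS, add_neg_cancel, trS_zero] using congrArg (trS (-v)) h

lemma trP_trP (u v : Euc n) (Q : Set (Set (Euc n))) : trP u (trP v Q) = trP (v + u) Q := by
  simp only [trP, image_image, trS_trS]

@[simp]
lemma trP_zero (Q : Set (Set (Euc n))) : trP 0 Q = Q := by
  simp [trP]

lemma sUnion_trP (u : Euc n) (Q : Set (Set (Euc n))) : ⋃₀ trP u Q = trS u (⋃₀ Q) := by
  simp only [trP, trS, sUnion_image, image_sUnion]

end Translation

lemma eq_zero_of_image_add_right_eq_self {E : Type*} [NormedAddCommGroup E]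
    [InnerProductSpace ℝ E] {K : Set E} (hK : IsCompact K) (hne : K.Nonempty) {u : E}
    (h : (· + u) '' K = K) : u = 0 := by
  have hcont : Continuous fun x : E => inner ℝ u x := by fun_prop
  obtain ⟨x, hx, hmax⟩ := hK.exists_isMaxOn hne hcont.continuousOn
  have hle : inner ℝ u (x + u) ≤ inner ℝ u x := hmax (h ▸ mem_image_of_mem _ hx)
  rw [inner_add_right] at hle
  exact inner_self_eq_zero.mp (le_antisymm (by linarith) real_inner_self_nonneg)

lemma IsTile.isCompact {n : ℕ} {s : Set (Euc n)} (h : IsTile s) : IsCompact s := by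
  obtain ⟨e⟩ := h
  have : CompactSpace (Metric.closedBall (0 : Euc n) 1) :=
    isCompact_iff_compactSpace.mp (isCompact_closedBall _ _)
  exact isCompact_iff_compactSpace.mpr e.symm.compactSpace

lemma IsTile.nonempty {n : ℕ} {s : Set (Euc n)} (h : IsTile s) : s.Nonempty := by
  obtain ⟨e⟩ := h
  exact ⟨e.symm ⟨0, by simp⟩, (e.symm ⟨0, by simp⟩).2⟩

lemma IsPatch.isCompact_sUnion {n : ℕ} {R : Set (Set (Euc n))} (hR : IsPatch R) :
    IsCompact (⋃₀ R) :=
  hR.2.isCompact_sUnion fun s hs => (hR.1.1 s hs).isCompact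

lemma IsPatch.nonempty_sUnion {n : ℕ} {R : Set (Set (Euc n))} (hR : IsPatch R)
    (hR0 : R.Nonempty) : (⋃₀ R).Nonempty := by
  obtain ⟨s, hs⟩ := hR0
  obtain ⟨x, hx⟩ := (hR.1.1 s hs).nonempty
  exact ⟨x, s, hs, hx⟩

lemma IsPatch.eq_of_trP_eq_trP {n : ℕ} {R : Set (Set (Euc n))} (hR : IsPatch R)
    (hR0 : R.Nonempty) {v w : Euc n} (h : trP v R = trP w R) : v = w := by
  have hfix : trP (v + -w) R = R := by
    simpa only [trP_trP, add_neg_cancel, trP_zero] using congrArg (trP (-w)) h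
  have hsupp : trS (v + -w) (⋃₀ R) = ⋃₀ R := by rw [← sUnion_trP, hfix]
  exact add_neg_eq_zero.mp <|
    eq_zero_of_image_add_right_eq_self hR.isCompact_sUnion (hR.nonempty_sUnion hR0) hsupp

lemma mulRelT_self {n : ℕ} {T R : Set (Set (Euc n))} {a : Set (Euc n)} {v : Euc n}
    (hv : trP v R ⊆ T) : mulRelT T (a, R, a) (a, R, a) (a, R, a) :=
  ⟨v, v, hv, hv, rfl, -v, by simp [trS_trS], by simp [trS_trS], by simp [trP_trP]⟩

theorem stmt19_general {n : ℕ} (T : Set (Set (Euc n)))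
    (P : Set (Set (Euc n))) (hP : P ∈ Mpatch T) (t : Set (Euc n))
    (R : Set (Set (Euc n))) (a b : Set (Euc n))
    (hR0 : R.Nonempty) (hRp : IsPatch R)
    (ha : a ∈ R)
    (h1 : sim3 (a, R, a) (t, P, t)) (h2 : sim3 (b, R, b) (t, P, t)) :
    a = b ∧
    mulRelT T (a, R, b) (a, R, b) (a, R, b) ∧
    ∀ (G : Type) [Group G] (σ : Set (Euc n) × Set (Set (Euc n)) × Set (Euc n) → G),
      (∀ x y, InST T x → InST T y → sim3 x y → σ x = σ y) →
      (∀ x y z, InST T x → InST T y → InST T z → mulRelT T x y z → σ z = σ x * σ y) →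
      σ (a, R, b) = 1 := by
  obtain ⟨v, hva : trS v a = t, -, hvR : trP v R = P⟩ := h1
  obtain ⟨w, hwb : trS w b = t, -, hwR : trP w R = P⟩ := h2
  have hvw : v = w := hRp.eq_of_trP_eq_trP hR0 (hvR.trans hwR.symm)
  have hab : a = b := trS_injective v (by rw [hva, hvw, hwb])
  subst hab
  have hmul : mulRelT T (a, R, a) (a, R, a) (a, R, a) :=
    mulRelT_self (hvR ▸ hP.1 : trP v R ⊆ T)
  refine ⟨rfl, hmul, fun G _ σ _ hσ => ?_⟩
  have hin : InST T (a, R, a) := ⟨ha, ha, v, hvR ▸ hP⟩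
  exact right_eq_mul.mp (hσ _ _ _ hin hin hin hmul)

/-- if `(a,R,a) ∼ (t,P,t)` and `(b,R,b) ∼ (t,P,t)` with `P ∈ M`, `t ∈ P`,
then `a = b`; consequently such a doubly pointed pattern class `[a,R,b]` is idempotent,
so for any grading `σ` of the connected tiling semigroup (a map constant on `∼`-classes
and multiplicative on nonzero products), `σ(a,R,b) = 1`: the isotropy group of the
idempotent `[t,P,t]` is trivial. -/
theorem stmt19 {n : ℕ} (T : Set (Set (Euc n))) (hT : IsTiling T)
    (P : Set (Set (Euc n))) (hP : P ∈ Mpatch T) (t : Set (Euc n)) (ht : t ∈ P)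
    (R : Set (Set (Euc n))) (a b : Set (Euc n))
    (hR0 : R.Nonempty) (hRp : IsPatch R) (hRc : IsPreconnected (⋃₀ R))
    (ha : a ∈ R) (hb : b ∈ R)
    (h1 : sim3 (a, R, a) (t, P, t)) (h2 : sim3 (b, R, b) (t, P, t)) :
    a = b ∧
    mulRelT T (a, R, b) (a, R, b) (a, R, b) ∧
    ∀ (G : Type) [Group G] (σ : Set (Euc n) × Set (Set (Euc n)) × Set (Euc n) → G),
      (∀ x y, InST T x → InST T y → sim3 x y → σ x = σ y) →
      (∀ x y z, InST T x → InST T y → InST T z → mulRelT T x y z → σ z = σ x * σ y) →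
      σ (a, R, b) = 1 :=
  stmt19_general T P hP t R a b hR0 hRp ha h1 h2
end
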